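/- arXiv:2103.05575 — 3 statements merged into one kernel-verified Lean document; each statement's English description precedes it below -/
import Mathlib

section
/- Let γ > 0, a > 0, p ∈ (10/3, 6], σ = 3(p−2)/2 and c > 0. If u ∈ H^1(ℝ³) satisfies ‖u‖₂² = c and A(u) = (γ/4)B(u) + (aσ/p)C(u) (i.e. u ∈ Λ(c)), then F(u) = (1/2)A(u) − (γ/4)B(u) − (a/p)C(u) satisfies F(u) ≥ ((σ−2)/(2σ))A(u) − (γ(σ−1)/4)K_H √(A(u)) c^{3/2}. In particular F restricted to Λ(c) is bounded below and coercive in A(u). -/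
open MeasureTheory Real

noncomputable section

abbrev E3 := EuclideanSpace ℝ (Fin 3)

/-- Kinetic energy `A(u) = ∫ |∇u|²`. -/
def Agrad (u : E3 → ℝ) : ℝ := ∫ x, ‖fderiv ℝ u x‖ ^ 2

/-- Coulomb energy `B(u) = ∫∫ |u(x)|²|u(y)|²/|x−y|`. -/
def Bcoul (u : E3 → ℝ) : ℝ := ∫ x, ∫ y, (u x) ^ 2 * (u y) ^ 2 / dist x y

/-- `C(u) = ∫ |u|^p`. -/
def Cpow (p : ℝ) (u : E3 → ℝ) : ℝ := ∫ x, |u x| ^ p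

/-- `u ∈ H¹(ℝ³)`: differentiable with `u` and `∇u` square integrable. -/
def H1 (u : E3 → ℝ) : Prop :=
  Differentiable ℝ u ∧ MemLp u 2 volume ∧ MemLp (fun x => fderiv ℝ u x) 2 volume

/-- `σ = 3(p−2)/2`. -/
def sig (p : ℝ) : ℝ := 3 * (p - 2) / 2

/-- coercivity on the Pohozaev manifold: if `u ∈ S(c)` satisfies
`A(u) = (γ/4)B(u) + (aσ/p)C(u)` and the Hardy bound holds, then
`F(u) ≥ ((σ−2)/(2σ))A(u) − (γ(σ−1)/4) K_H √(A(u)) c^{3/2}`. -/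
theorem stmt9 (p γ a c K_H : ℝ) (hγ : 0 < γ) (ha : 0 < a)
    (hp1 : 10 / 3 < p) (hp2 : p ≤ 6) (hc : 0 < c) (hKH : 0 < K_H)
    (u : E3 → ℝ) (hu : H1 u) (huc : (∫ x, (u x) ^ 2) = c)
    (hHardy : Bcoul u ≤ K_H * Real.sqrt (Agrad u) * c ^ ((3 : ℝ) / 2))
    (hLam : Agrad u = (γ / 4) * Bcoul u + (a * sig p / p) * Cpow p u) :
    (1 / 2) * Agrad u - (γ / 4) * Bcoul u - (a / p) * Cpow p u ≥
      ((sig p - 2) / (2 * sig p)) * Agrad u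
        - (γ * (sig p - 1) / 4) * K_H * Real.sqrt (Agrad u) * c ^ ((3 : ℝ) / 2) := by
  have hσ : 2 < sig p := by unfold sig; linarith
  have hσ0 : (0:ℝ) < sig p := by linarith
  have hp : 0 < p := by linarith
  have hB : 0 ≤ Bcoul u := by
    apply integral_nonneg; intro x
    apply integral_nonneg; intro y
    positivity
  set R := K_H * Real.sqrt (Agrad u) * c ^ ((3 : ℝ) / 2) with hRdef
  have hR : 0 ≤ R := by positivity
  have hsub : (a / p) * Cpow p u = (Agrad u - γ / 4 * Bcoul u) / sig p := by
    have h : Agrad u - γ / 4 * Bcoul u = sig p * ((a / p) * Cpow p u) := by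
      rw [hLam]; field_simp; ring
    rw [h]; field_simp
  rw [hsub]
  have e2 : 1 / 2 * Agrad u - γ / 4 * Bcoul u - (Agrad u - γ / 4 * Bcoul u) / sig p
      = (sig p - 2) / (2 * sig p) * Agrad u - γ * (sig p - 1) / (4 * sig p) * Bcoul u := by
    field_simp; ring
  have hcoef : 0 ≤ γ * (sig p - 1) / (4 * sig p) := by
    have h1 : (0:ℝ) < sig p - 1 := by linarith
    positivity
  have key : γ * (sig p - 1) / (4 * sig p) * Bcoul u ≤ γ * (sig p - 1) / 4 * R := by
    have h1 : γ * (sig p - 1) / (4 * sig p) * Bcoul u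
        ≤ γ * (sig p - 1) / (4 * sig p) * R :=
      mul_le_mul_of_nonneg_left hHardy hcoef
    have h2 : γ * (sig p - 1) / (4 * sig p) ≤ γ * (sig p - 1) / 4 := by
      apply div_le_div_of_nonneg_left (by nlinarith) (by norm_num) (by linarith)
    nlinarith [mul_le_mul_of_nonneg_right h2 hR]
  have eR : γ * (sig p - 1) / 4 * K_H * Real.sqrt (Agrad u) * c ^ ((3:ℝ) / 2)
      = γ * (sig p - 1) / 4 * R := by rw [hRdef]; ring
  linarith [e2, key, eR.ge, eR.le]
end
end

section
/- Let γ > 0, a > 0, p ∈ (10/3, 6], σ = 3(p−2)/2, c > 0. If u ∈ S(c) satisfies A(u) < (aσ(σ−1)/p)C(u) (in particular if u ∈ Λ⁻(c)), then A(u) > (p/(aσ(σ−1)K_GN c^{(6−p)/4}))^{2/(σ−2)} > 0. In particular, for p ∈ (10/3, 6), A(u) > [p/(aσ(σ−1)K_GN)]^{2/(σ−2)} c^{−(6−p)/(3p−10)}. -/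
open MeasureTheory Real

noncomputable section

/-- if `u ∈ S(c)` satisfies `A(u) < (aσ(σ−1)/p)C(u)` (as on `Λ⁻(c)`)
and the Gagliardo–Nirenberg bound holds, then
`A(u) > (p/(aσ(σ−1)K_GN c^{(6−p)/4}))^{2/(σ−2)} > 0`; for `p < 6` this reads
`A(u) > [p/(aσ(σ−1)K_GN)]^{2/(σ−2)} c^{−(6−p)/(3p−10)}`. -/
theorem stmt11 (p γ a c K_GN : ℝ) (hγ : 0 < γ) (ha : 0 < a)
    (hp1 : 10 / 3 < p) (hp2 : p ≤ 6) (hc : 0 < c) (hKGN : 0 < K_GN)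
    (u : E3 → ℝ) (hu : H1 u) (huc : (∫ x, (u x) ^ 2) = c) (hA0 : 0 ≤ Agrad u)
    (hGN : Cpow p u ≤ K_GN * (Agrad u) ^ (sig p / 2) * c ^ ((6 - p) / 4))
    (hMinus : Agrad u < (a * sig p * (sig p - 1) / p) * Cpow p u) :
    (p / (a * sig p * (sig p - 1) * K_GN * c ^ ((6 - p) / 4))) ^ (2 / (sig p - 2)) < Agrad u ∧
    0 < (p / (a * sig p * (sig p - 1) * K_GN * c ^ ((6 - p) / 4))) ^ (2 / (sig p - 2)) ∧
    (p < 6 →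
      (p / (a * sig p * (sig p - 1) * K_GN)) ^ (2 / (sig p - 2))
        * c ^ (-(6 - p) / (3 * p - 10)) < Agrad u) := by

  have hp0 : (0:ℝ) < p := by linarith
  have hs : (2:ℝ) < sig p := by unfold sig; linarith
  have hs0 : (0:ℝ) < sig p := by linarith
  have hs1 : (0:ℝ) < sig p - 1 := by linarith
  have hs2 : (0:ℝ) < sig p - 2 := by linarith
  have hce : (0:ℝ) < c ^ ((6 - p) / 4) := Real.rpow_pos_of_pos hc _
  have hD : (0:ℝ) < a * sig p * (sig p - 1) * K_GN * c ^ ((6 - p) / 4) := by positivity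
  have hD' : (0:ℝ) < a * sig p * (sig p - 1) * K_GN := by positivity
  -- A(u) > 0
  have hApos : 0 < Agrad u := by
    rcases lt_or_eq_of_le hA0 with h | h
    · exact h
    · exfalso
      have hz : (Agrad u) ^ (sig p / 2) = 0 := by
        rw [← h, Real.zero_rpow (by positivity)]
      have hC : Cpow p u ≤ 0 := by
        calc Cpow p u ≤ K_GN * (Agrad u) ^ (sig p / 2) * c ^ ((6 - p) / 4) := hGN
          _ = 0 := by rw [hz]; ring
      have hM : (0:ℝ) < a * sig p * (sig p - 1) / p := by positivity
      nlinarith [hMinus]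
  -- main chain
  set x := (Agrad u) ^ ((sig p - 2) / 2) with hxdef
  have hxpos : 0 < x := Real.rpow_pos_of_pos hApos _
  have hsplit : (Agrad u) ^ (sig p / 2) = x * Agrad u := by
    have h : sig p / 2 = (sig p - 2) / 2 + 1 := by ring
    rw [hxdef, h, Real.rpow_add hApos, Real.rpow_one]
  have h1 : Agrad u < (a * sig p * (sig p - 1) / p) * (K_GN * (x * Agrad u) * c ^ ((6 - p) / 4)) := by
    calc Agrad u < (a * sig p * (sig p - 1) / p) * Cpow p u := hMinus
      _ ≤ (a * sig p * (sig p - 1) / p) * (K_GN * (Agrad u) ^ (sig p / 2) * c ^ ((6 - p) / 4)) := by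
          apply mul_le_mul_of_nonneg_left hGN (by positivity)
      _ = (a * sig p * (sig p - 1) / p) * (K_GN * (x * Agrad u) * c ^ ((6 - p) / 4)) := by
          rw [hsplit]
  have key : 1 < (a * sig p * (sig p - 1) / p) * K_GN * c ^ ((6 - p) / 4) * x := by
    have h1' : 1 * Agrad u < ((a * sig p * (sig p - 1) / p) * K_GN * c ^ ((6 - p) / 4) * x) * Agrad u := by
      calc 1 * Agrad u = Agrad u := one_mul _
        _ < (a * sig p * (sig p - 1) / p) * (K_GN * (x * Agrad u) * c ^ ((6 - p) / 4)) := h1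
        _ = ((a * sig p * (sig p - 1) / p) * K_GN * c ^ ((6 - p) / 4) * x) * Agrad u := by ring
    exact lt_of_mul_lt_mul_right h1' hApos.le
  -- base < x
  have hbase : p / (a * sig p * (sig p - 1) * K_GN * c ^ ((6 - p) / 4)) < x := by
    rw [div_lt_iff₀ hD]
    have := mul_lt_mul_of_pos_left key hp0
    have hq : p * ((a * sig p * (sig p - 1) / p) * K_GN * c ^ ((6 - p) / 4) * x)
        = x * (a * sig p * (sig p - 1) * K_GN * c ^ ((6 - p) / 4)) := by
      field_simp
    linarith [hq ▸ this]
  have hbpos : 0 < p / (a * sig p * (sig p - 1) * K_GN * c ^ ((6 - p) / 4)) := by positivity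
  have htpos : 0 < 2 / (sig p - 2) := by positivity
  have hmain : (p / (a * sig p * (sig p - 1) * K_GN * c ^ ((6 - p) / 4))) ^ (2 / (sig p - 2)) < Agrad u := by
    have h2 := Real.rpow_lt_rpow hbpos.le hbase htpos
    have hx2 : x ^ (2 / (sig p - 2)) = Agrad u := by
      rw [hxdef, ← Real.rpow_mul hApos.le]
      have : (sig p - 2) / 2 * (2 / (sig p - 2)) = 1 := by
        field_simp
      rw [this, Real.rpow_one]
    rwa [hx2] at h2
  refine ⟨hmain, Real.rpow_pos_of_pos hbpos _, fun hp6 => ?_⟩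
  have h310 : (3:ℝ) * p - 10 ≠ 0 := by intro h; linarith
  have hbeq : p / (a * sig p * (sig p - 1) * K_GN * c ^ ((6 - p) / 4))
      = (p / (a * sig p * (sig p - 1) * K_GN)) * c ^ (-((6 - p) / 4)) := by
    rw [Real.rpow_neg hc.le, ← div_div, div_eq_mul_inv]
  have hb'pos : 0 < p / (a * sig p * (sig p - 1) * K_GN) := by positivity
  have hrw : (p / (a * sig p * (sig p - 1) * K_GN * c ^ ((6 - p) / 4))) ^ (2 / (sig p - 2))
      = (p / (a * sig p * (sig p - 1) * K_GN)) ^ (2 / (sig p - 2)) * c ^ (-(6 - p) / (3 * p - 10)) := by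
    rw [hbeq, Real.mul_rpow hb'pos.le (Real.rpow_nonneg hc.le _),
      ← Real.rpow_mul hc.le]
    congr 1
    have : -((6 - p) / 4) * (2 / (sig p - 2)) = -(6 - p) / (3 * p - 10) := by
      rw [show sig p - 2 = (3 * p - 10) / 2 from by unfold sig; ring]
      field_simp
      ring
    rw [this]
  rw [← hrw]
  exact hmain
end
end

section
/- Let γ > 0, a > 0, p ∈ (10/3, 6], σ = 3(p−2)/2 and c > 0. If u ∈ S(c) satisfies A(u) = (γ/4)B(u) + (aσ/p)C(u) and A(u) > (aσ(σ−1)/p)C(u) (i.e. u ∈ Λ⁺(c)), then A(u) < [γ(σ−1)K_H/(4(σ−2))]² c³. -/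
open MeasureTheory Real

noncomputable section

/-- Pure arithmetic core of Statement 12. -/
lemma stmt12_aux (s γ K_H X A B t c32 : ℝ) (hs : 2 < s) (hγ : 0 < γ) (hKH : 0 < K_H)
    (hX0 : 0 ≤ X) (ht0 : 0 ≤ t) (htA : t ^ 2 = A) (hc32 : 0 < c32)
    (hHardy : B ≤ K_H * t * c32)
    (hLam : A = γ / 4 * B + X) (hPlus : (s - 1) * X < A) :
    A < (γ * (s - 1) * K_H / (4 * (s - 2))) ^ 2 * c32 ^ 2 := by
  have hs2 : (0:ℝ) < s - 2 := by linarith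
  have hstep1 : (s - 2) * X < γ / 4 * B := by nlinarith [hPlus, hLam]
  have hstep2 : (s - 2) * A < (s - 1) * (γ / 4 * B) := by
    rw [hLam]; nlinarith [hstep1]
  have hstep3 : (s - 2) * A < (s - 1) * (γ / 4) * (K_H * t * c32) := by
    have h := mul_le_mul_of_nonneg_left hHardy
      (mul_nonneg (by linarith : (0:ℝ) ≤ s - 1) (by linarith : (0:ℝ) ≤ γ / 4))
    nlinarith [h, hstep2]
  set M := γ * (s - 1) * K_H / (4 * (s - 2)) with hM
  have hMpos : 0 < M := div_pos (mul_pos (mul_pos hγ (by linarith)) hKH) (by linarith)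
  rcases eq_or_lt_of_le ht0 with h0 | h0
  · have hA00 : A = 0 := by rw [← htA, ← h0]; ring
    rw [hA00]
    exact mul_pos (pow_pos hMpos 2) (pow_pos hc32 2)
  · have hkey : (s - 1) * (γ / 4) * (K_H * t * c32) = (s - 2) * (M * c32 * t) := by
      rw [hM]; field_simp
    have htlt : A < M * c32 * t := by
      rw [hkey] at hstep3
      exact (mul_lt_mul_iff_right₀ hs2).mp hstep3
    have ht2 : t < M * c32 := by
      have hh : t * t < M * c32 * t := by nlinarith [htlt, htA]
      exact lt_of_mul_lt_mul_right hh ht0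
    calc A = t ^ 2 := htA.symm
      _ < (M * c32) ^ 2 := by nlinarith [ht2, ht0]
      _ = M ^ 2 * c32 ^ 2 := by ring

/-- if `u ∈ Λ⁺(c)` (Pohozaev identity plus `A(u) > (aσ(σ−1)/p)C(u)`)
and the Hardy bound holds, then `A(u) < [γ(σ−1)K_H/(4(σ−2))]² c³`. -/
theorem stmt12 (p γ a c K_H : ℝ) (hγ : 0 < γ) (ha : 0 < a)
    (hp1 : 10 / 3 < p) (hp2 : p ≤ 6) (hc : 0 < c) (hKH : 0 < K_H)
    (u : E3 → ℝ) (hu : H1 u) (huc : (∫ x, (u x) ^ 2) = c)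
    (hA0 : 0 ≤ Agrad u) (hC0 : 0 ≤ Cpow p u)
    (hHardy : Bcoul u ≤ K_H * Real.sqrt (Agrad u) * c ^ ((3 : ℝ) / 2))
    (hLam : Agrad u = (γ / 4) * Bcoul u + (a * sig p / p) * Cpow p u)
    (hPlus : (a * sig p * (sig p - 1) / p) * Cpow p u < Agrad u) :
    Agrad u < (γ * (sig p - 1) * K_H / (4 * (sig p - 2))) ^ 2 * c ^ 3 := by
  have hs2 : 2 < sig p := by unfold sig; linarith
  have hp0 : 0 < p := by linarith
  have hX0 : 0 ≤ a * sig p / p * Cpow p u :=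
    mul_nonneg (div_nonneg (mul_nonneg ha.le (by linarith)) hp0.le) hC0
  have hPlus' : (sig p - 1) * (a * sig p / p * Cpow p u) < Agrad u := by
    have e : (sig p - 1) * (a * sig p / p * Cpow p u)
        = a * sig p * (sig p - 1) / p * Cpow p u := by ring
    rw [e]; exact hPlus
  have hc3 : (c ^ ((3:ℝ)/2)) ^ 2 = c ^ 3 := by
    rw [← Real.rpow_natCast (c ^ ((3:ℝ)/2)) 2, ← Real.rpow_mul hc.le,
      show ((3:ℝ)/2 * (2:ℕ) : ℝ) = ((3:ℕ):ℝ) by norm_num, Real.rpow_natCast]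
  rw [← hc3]
  exact stmt12_aux (sig p) γ K_H _ _ _ _ _ hs2 hγ hKH hX0 (Real.sqrt_nonneg _)
    (Real.sq_sqrt hA0) (Real.rpow_pos_of_pos hc _) hHardy hLam hPlus'
end
end
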